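/- Let $\mathfrak{g}$ be the 3-dimensional Lie algebra over a field $k$ with basis $\{x, y, z\}$ and brackets $[x,y] = y$, $[z,y] = 0$, $[z,x] = -z + \lambda y$ for a fixed $\lambda \in k$. Define $\delta(x) = \delta(y) = 0$ and $\delta(z) = x \otimes y - y \otimes x$. Then $\delta$ is coassociative and $(\mathfrak{g}, \delta)$ satisfies the compatibility condition of a coassociative Lie algebra, and moreover $\tau\delta = -\delta$ (anti-cocommutativity) and $(\delta \otimes 1)\delta = 0$ (2-conilpotency). -/

import Mathlib

/-!
Under `L ⊗ L → U(L) ⊗ U(L)`, bracketing with `a ⊗ 1 + 1 ⊗ a` is the adjoint action of `a` on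
`L ⊗ L`, so the compatibility condition splits into the 1-cocycle identity
`δ[a,b] = a • δ(b) - b • δ(a)`, which is checked on the basis, and the vanishing of
`[δ(a), δ(b)]`, which holds because `δ(a) = z*(a) (x ⊗ y - y ⊗ x)` takes values on a line.
The same formula for `δ`, with `δ(x) = δ(y) = 0`, gives `(δ ⊗ 1)δ = (1 ⊗ δ)δ = 0` and `τδ = -δ`.
-/

open TensorProduct

noncomputable section

variable (k : Type*) [Field k]

def Coassoc {V : Type*} [AddCommGroup V] [Module k V] (δ : V →ₗ[k] V ⊗[k] V) : Prop :=
  (TensorProduct.assoc k V V V).toLinearMap ∘ₗ (TensorProduct.map δ LinearMap.id) ∘ₗ δ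
    = (TensorProduct.map LinearMap.id δ) ∘ₗ δ

abbrev UEA (L : Type*) [LieRing L] [LieAlgebra k L] := UniversalEnvelopingAlgebra k L

/-- The canonical embedding `L → U(L)`, as a linear map. -/
def emb (L : Type*) [LieRing L] [LieAlgebra k L] : L →ₗ[k] UEA k L :=
  letI := LieRing.ofAssociativeRing (A := UEA k L)
  (UniversalEnvelopingAlgebra.ι k).toLinearMap

/-- The canonical map `L ⊗ L → U(L) ⊗ U(L)`. -/
def emb2 (L : Type*) [LieRing L] [LieAlgebra k L] :
    L ⊗[k] L →ₗ[k] UEA k L ⊗[k] UEA k L :=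
  TensorProduct.map (emb k L) (emb k L)

/-- The compatibility condition (E1.1.1)=(E1.2.2) for a coassociative Lie algebra,
stated inside `U(L) ⊗ U(L)`, where brackets are ring commutators.  (It encodes both
the identity `δ([a,b]) = b₁ ⊗ [a,b₂] + [a,b₁] ⊗ b₂ + [a₁,b] ⊗ a₂ + a₁ ⊗ [a₂,b] +
[δ(a),δ(b)]` and the requirement that `[δ(a),δ(b)]` lies in `L ⊗ L`.) -/
def Compat {L : Type*} [LieRing L] [LieAlgebra k L] (δ : L →ₗ[k] L ⊗[k] L) : Prop :=
  ∀ a b : L,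
    emb2 k L (δ ⁅a, b⁆) =
      ⁅(emb k L a) ⊗ₜ[k] (1 : UEA k L) + (1 : UEA k L) ⊗ₜ[k] (emb k L a), emb2 k L (δ b)⁆ +
      ⁅emb2 k L (δ a), (emb k L b) ⊗ₜ[k] (1 : UEA k L) + (1 : UEA k L) ⊗ₜ[k] (emb k L b)⁆ +
      ⁅emb2 k L (δ a), emb2 k L (δ b)⁆

theorem coassoc_of_comp_eq_zero {k V : Type*} [Field k] [AddCommGroup V] [Module k V]
    {δ : V →ₗ[k] V ⊗[k] V} (hl : TensorProduct.map δ LinearMap.id ∘ₗ δ = 0)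
    (hr : TensorProduct.map LinearMap.id δ ∘ₗ δ = 0) : Coassoc k δ := by
  rw [Coassoc, hl, hr, LinearMap.comp_zero]

attribute [local instance] LieRing.ofAssociativeRing LieAlgebra.ofAssociativeAlgebra

section CoassociativeLie

variable {k : Type*} [Field k] {L : Type*} [LieRing L] [LieAlgebra k L]

theorem emb_lie (a c : L) : emb k L ⁅a, c⁆ = ⁅emb k L a, emb k L c⁆ :=
  (UniversalEnvelopingAlgebra.ι k (L := L)).map_lie a c

theorem lie_coproduct_emb2 (a : L) (t : L ⊗[k] L) :
    ⁅emb k L a ⊗ₜ[k] (1 : UEA k L) + (1 : UEA k L) ⊗ₜ[k] emb k L a, emb2 k L t⁆ =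
      emb2 k L ⁅a, t⁆ := by
  induction t using TensorProduct.induction_on with
  | zero => simp
  | tmul u v =>
    simp only [emb2, map_tmul, TensorProduct.LieModule.lie_tmul_right, map_add, emb_lie,
      Ring.lie_def, add_mul, mul_add, Algebra.TensorProduct.tmul_mul_tmul, one_mul,
      mul_one, sub_tmul, tmul_sub]
    abel
  | add t₁ t₂ h₁ h₂ => rw [map_add, lie_add, h₁, h₂, lie_add, map_add]

theorem compat_of_lie_cocycle {δ : L →ₗ[k] L ⊗[k] L}
    (hδ : ∀ a c, δ ⁅a, c⁆ = ⁅a, δ c⁆ - ⁅c, δ a⁆)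
    (hcomm : ∀ a c, ⁅emb2 k L (δ a), emb2 k L (δ c)⁆ = 0) : Compat k δ := by
  intro a c
  rw [hδ, hcomm, add_zero, ← lie_skew (emb2 k L (δ a)), lie_coproduct_emb2, lie_coproduct_emb2,
    map_sub, sub_eq_add_neg]

theorem lie_cocycle_of_basis {ι : Type*} (b : Module.Basis ι k L) {δ : L →ₗ[k] L ⊗[k] L}
    (h : ∀ i j, δ ⁅b i, b j⁆ = ⁅b i, δ (b j)⁆ - ⁅b j, δ (b i)⁆) (a c : L) :
    δ ⁅a, c⁆ = ⁅a, δ c⁆ - ⁅c, δ a⁆ := by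
  let act : L →ₗ[k] Module.End k (L ⊗[k] L) := LieModule.toEnd k L (L ⊗[k] L)
  have hB := LinearMap.ext_basis (B := (LieModule.toEnd k L L : L →ₗ[k] Module.End k L).compr₂ δ)
    (B' := act.compl₂ δ - (act.compl₂ δ).flip) b b h
  exact LinearMap.congr_fun₂ hB a c

theorem apply_eq_coord_smul (b : Module.Basis (Fin 3) k L) {δ : L →ₗ[k] L ⊗[k] L}
    (hδx : δ (b 0) = 0) (hδy : δ (b 1) = 0) (hδz : δ (b 2) = b 0 ⊗ₜ b 1 - b 1 ⊗ₜ b 0) (a : L) :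
    δ a = b.coord 2 a • (b 0 ⊗ₜ b 1 - b 1 ⊗ₜ b 0) := by
  have hδ : δ = (b.coord 2).smulRight (b 0 ⊗ₜ b 1 - b 1 ⊗ₜ b 0) := by
    refine b.ext fun i => ?_
    fin_cases i <;> simp [hδx, hδy, hδz, Module.Basis.coord_apply]
  rw [hδ, LinearMap.smulRight_apply]

end CoassociativeLie

/-- Example 4.2: the 3-dimensional Lie algebra with basis `x, y, z`,
`[x,y] = y`, `[z,y] = 0`, `[z,x] = -z + λy`, with `δ(x) = δ(y) = 0` and
`δ(z) = x ⊗ y - y ⊗ x`, is a coassociative Lie algebra which is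
anti-cocommutative and 2-conilpotent. -/
theorem example_three_dim_anti_cocommutative
    {L : Type*} [LieRing L] [LieAlgebra k L]
    (b : Module.Basis (Fin 3) k L)
    (x y z : L) (hx : x = b 0) (hy : y = b 1) (hz : z = b 2)
    (lam : k)
    (hxy : ⁅x, y⁆ = y) (hzy : ⁅z, y⁆ = 0) (hzx : ⁅z, x⁆ = -z + lam • y)
    (δ : L →ₗ[k] L ⊗[k] L)
    (hδx : δ x = 0) (hδy : δ y = 0)
    (hδz : δ z = x ⊗ₜ[k] y - y ⊗ₜ[k] x) :
    Coassoc k δ ∧ Compat k δ ∧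
      (TensorProduct.comm k L L).toLinearMap ∘ₗ δ = -δ ∧
      (TensorProduct.map δ LinearMap.id) ∘ₗ δ = 0 := by
  subst hx hy hz
  have hδ := apply_eq_coord_smul b hδx hδy hδz
  have hδ_id : TensorProduct.map δ LinearMap.id ∘ₗ δ = 0 := by
    ext a; simp [hδ]
  have hid_δ : TensorProduct.map LinearMap.id δ ∘ₗ δ = 0 := by
    ext a; simp [hδ]
  have hcocycle : ∀ i j, δ ⁅b i, b j⁆ = ⁅b i, δ (b j)⁆ - ⁅b j, δ (b i)⁆ := by
    have hyx : ⁅b 1, b 0⁆ = -(b 1) := by rw [← lie_skew, hxy]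
    have hyz : ⁅b 1, b 2⁆ = 0 := by rw [← lie_skew, hzy, neg_zero]
    have hxz : ⁅b 0, b 2⁆ = b 2 - lam • b 1 := by rw [← lie_skew, hzx]; abel
    intro i j
    fin_cases i <;> fin_cases j <;>
      simp [hδx, hδy, hδz, hxy, hzy, hzx, hyx, hyz, hxz, TensorProduct.LieModule.lie_tmul_right,
        neg_tmul, tmul_neg]
  refine ⟨coassoc_of_comp_eq_zero hδ_id hid_δ, compat_of_lie_cocycle
    (lie_cocycle_of_basis b hcocycle) fun a c => by simp [hδ], ?_, hδ_id⟩
  ext a; simp [hδ, ← smul_neg]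

end
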